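/- Let n < r be positive integers and v₁,…,v_r ∈ ℤⁿ with v_i = e_i for 1 ≤ i ≤ n and v₁+⋯+v_r = 0. Let V ⊆ ℚ(q)[x₁,…,xₙ] be the ℚ(q)-linear span of the polynomials RS_a(x;q), as a ranges over all tuples a ∈ ℤ^r with a_j = 0 for 1 ≤ j ≤ n and P(a)∩ℤⁿ ≠ ∅. Then V is invariant under the Jackson derivatives (d/dx₁)_q, …, (d/dxₙ)_q, and V is indecomposable under them: whenever V = V₁ ⊕ V₂ with V₁ and V₂ ℚ(q)-subspaces each invariant under all of (d/dx₁)_q, …, (d/dxₙ)_q, then V₁ = 0 or V₂ = 0. -/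

import Mathlib

noncomputable section
open MvPolynomial

/-- `(q;q)_d = ∏_{k=1}^d (1 - q^k)` in `ℚ(q)`. -/
def qqPoch (q : RatFunc ℚ) (d : ℕ) : RatFunc ℚ :=
  ∏ k ∈ Finset.range d, (1 - q ^ (k + 1))

/-- The substitution operator `T_{i,q} : f(x₁,…,x_i,…,xₙ) ↦ f(x₁,…,q·x_i,…,xₙ)`. -/
def Tq {n : ℕ} (i : Fin n) (f : MvPolynomial (Fin n) (RatFunc ℚ)) :
    MvPolynomial (Fin n) (RatFunc ℚ) :=
  aeval (fun j : Fin n => if j = i then C RatFunc.X * X j else X j) f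

/-- The `i`-th Jackson (partial `q`-)derivative `(d/dx_i)_q f = (f − T_{i,q} f)/((1−q)x_i)`;
the numerator `f − T_{i,q} f` is exactly divisible by the monomial `x_i`. -/
def jackson {n : ℕ} (i : Fin n) (f : MvPolynomial (Fin n) (RatFunc ℚ)) :
    MvPolynomial (Fin n) (RatFunc ℚ) :=
  C (1 - RatFunc.X : RatFunc ℚ)⁻¹ * ((f - Tq i f).divMonomial (Finsupp.single i 1))

/-- The generalized Rogers–Szegő polynomial
`RS_a(x;q) = Σ_{u ∈ P(a)∩ℤⁿ} [|a|; ⟨u,v₁⟩+a₁,…,⟨u,v_r⟩+a_r]_q x₁^{u₁}⋯xₙ^{uₙ}`,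
where `P(a) = {u ∈ ℝⁿ : ⟨u,v_i⟩ ≥ −a_i for all i}` lies in the nonnegative orthant
(so its lattice points are indexed by `u : Fin n → ℕ`); the sum is a finite sum
(`∑ᶠ`, a finitely supported sum), equal to `0` if `P(a)∩ℤⁿ = ∅`. -/
def RSgen (n r : ℕ) (v : Fin r → Fin n → ℤ) (a : Fin r → ℤ) :
    MvPolynomial (Fin n) (RatFunc ℚ) :=
  ∑ᶠ u : Fin n → ℕ,
    if ∀ i, -(a i) ≤ ∑ j, (u j : ℤ) * v i j then
      monomial (Finsupp.equivFunOnFinite.symm u)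
        (qqPoch RatFunc.X (∑ i, a i).toNat /
          ∏ i, qqPoch RatFunc.X ((∑ j, (u j : ℤ) * v i j) + a i).toNat)
    else 0

end

/-!
On coefficients, `(d/dx_i)_q` multiplies the coefficient of `x^(w+e_i)` by `[w_i+1]_q` and moves it
to `x^w`. The coefficient of `x^u` in `RS_a` is the `q`-multinomial coefficient of the tuple
`(⟨u,v_p⟩ + a_p)_p`, and replacing `u` by `u + e_i` adds the column `(v_{p,i})_p` to that tuple.
With `a' = a + (v_{p,i})_p - e_i` the tuple becomes `k + e_i`, where `k_i = w_i` and `|k| = |a| - 1`,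
so the Pascal-type identity `[|k|+1; k+e_i]_q [k_i+1]_q = [|k|+1]_q [|k|; k]_q` gives
`(d/dx_i)_q RS_a = [|a|]_q RS_{a'}`. Since `a'` again vanishes on the first `n` coordinates, `V` is
invariant.

A nonzero invariant subspace contains `1`: a polynomial of positive degree has a Jackson derivative
that is nonzero and of lower degree, and a nonzero constant is a unit. So two nonzero invariant
subspaces always intersect.
-/

open MvPolynomial

noncomputable section

theorem RatFunc.one_sub_X_pow_ne_zero {K : Type*} [Field K] {s : ℕ} (hs : s ≠ 0) :
    (1 - RatFunc.X ^ s : RatFunc K) ≠ 0 := by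
  rw [sub_ne_zero, ne_comm, ← RatFunc.algebraMap_X, ← map_pow,
    ← map_one (algebraMap (Polynomial K) _), (RatFunc.algebraMap_injective K).ne_iff]
  intro h
  simpa [hs] using congrArg Polynomial.natDegree h

theorem qqPoch_ne_zero (d : ℕ) : qqPoch RatFunc.X d ≠ 0 :=
  Finset.prod_ne_zero_iff.2 fun k _ => RatFunc.one_sub_X_pow_ne_zero k.succ_ne_zero

theorem qqPoch_succ (d : ℕ) :
    qqPoch RatFunc.X (d + 1) = qqPoch RatFunc.X d * (1 - RatFunc.X ^ (d + 1)) :=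
  Finset.prod_range_succ _ _

section Jackson

variable {n : ℕ}

theorem Tq_monomial (i : Fin n) (s : Fin n →₀ ℕ) (c : RatFunc ℚ) :
    Tq i (monomial s c) = monomial s (RatFunc.X ^ s i * c) := by
  have hfactor : ∀ j, (if j = i then C RatFunc.X * X j else X j) ^ s j =
      C (RatFunc.X ^ (if j = i then s j else 0)) *
        (X j : MvPolynomial (Fin n) (RatFunc ℚ)) ^ s j := by
    intro j; split_ifs <;> simp [mul_pow]
  rw [Tq, aeval_monomial, Finsupp.prod_fintype _ _ (by simp),
    Finset.prod_congr rfl fun j _ => hfactor j, Finset.prod_mul_distrib, ← map_prod,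
    Finset.prod_pow_eq_pow_sum, Finset.sum_ite_eq',
    if_pos (Finset.mem_univ _), monomial_eq, Finsupp.prod_fintype _ _ (by simp),
    algebraMap_eq, map_mul]
  ring

theorem coeff_Tq (i : Fin n) (f : MvPolynomial (Fin n) (RatFunc ℚ)) (t : Fin n →₀ ℕ) :
    (Tq i f).coeff t = RatFunc.X ^ t i * f.coeff t := by
  induction f using MvPolynomial.induction_on' with
  | monomial s c =>
    rw [Tq_monomial, coeff_monomial, coeff_monomial]
    split_ifs with h <;> simp [h]
  | add f g hf hg => simp only [Tq, map_add, coeff_add] at *; rw [hf, hg, mul_add]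

theorem coeff_jackson (i : Fin n) (f : MvPolynomial (Fin n) (RatFunc ℚ)) (w : Fin n →₀ ℕ) :
    (jackson i f).coeff w =
      (1 - RatFunc.X)⁻¹ * (1 - RatFunc.X ^ (w i + 1)) * f.coeff (w + Finsupp.single i 1) := by
  rw [jackson, coeff_C_mul, coeff_divMonomial, coeff_sub, coeff_Tq, add_comm (Finsupp.single i 1)]
  simp only [Finsupp.add_apply, Finsupp.single_eq_same]
  ring

def jacksonLinear (i : Fin n) :
    MvPolynomial (Fin n) (RatFunc ℚ) →ₗ[RatFunc ℚ] MvPolynomial (Fin n) (RatFunc ℚ) where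
  toFun := jackson i
  map_add' f g := by ext w; simp only [coeff_jackson, coeff_add]; ring
  map_smul' c f := by
    ext w; simp only [coeff_jackson, coeff_smul, RingHom.id_apply, smul_eq_mul]; ring

theorem jacksonLinear_apply (i : Fin n) (f : MvPolynomial (Fin n) (RatFunc ℚ)) :
    jacksonLinear i f = jackson i f := rfl

theorem coeff_jackson_ne_zero {f : MvPolynomial (Fin n) (RatFunc ℚ)} {i : Fin n} {w : Fin n →₀ ℕ}
    (hw : w + Finsupp.single i 1 ∈ f.support) : (jackson i f).coeff w ≠ 0 := by
  rw [coeff_jackson]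
  refine mul_ne_zero (mul_ne_zero (inv_ne_zero ?_) ?_) (mem_support_iff.1 hw)
  · simpa using RatFunc.one_sub_X_pow_ne_zero one_ne_zero
  · exact RatFunc.one_sub_X_pow_ne_zero (Nat.succ_ne_zero _)

theorem exists_jackson_ne_zero {f : MvPolynomial (Fin n) (RatFunc ℚ)} (hf : f.totalDegree ≠ 0) :
    ∃ i, jackson i f ≠ 0 := by
  obtain ⟨s, hs, hs0⟩ : ∃ s ∈ f.support, s ≠ 0 := by
    by_contra! h
    exact hf (Nat.le_zero.1 (Finset.sup_le fun s hs => by simp [h s hs]))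
  obtain ⟨i, hi⟩ := Finsupp.ne_iff.1 hs0
  have hs' : s - Finsupp.single i 1 + Finsupp.single i 1 ∈ f.support := by
    rwa [tsub_add_cancel_of_le (Finsupp.single_le_iff.2 (Nat.one_le_iff_ne_zero.2 hi))]
  exact ⟨i, fun h => coeff_jackson_ne_zero hs' (by rw [h, coeff_zero])⟩

theorem totalDegree_jackson_lt {f : MvPolynomial (Fin n) (RatFunc ℚ)} {i : Fin n}
    (h : jackson i f ≠ 0) : (jackson i f).totalDegree < f.totalDegree := by
  obtain ⟨t, ht, hdeg⟩ := (jackson i f).support.exists_mem_eq_sup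
    (support_nonempty.2 h) fun s => s.sum fun _ e => e
  have hshift : (t + Finsupp.single i 1) ∈ f.support := by
    by_contra hnot
    exact mem_support_iff.1 ht (by rw [coeff_jackson, notMem_support_iff.1 hnot, mul_zero])
  calc (jackson i f).totalDegree = t.sum fun _ e => e := hdeg
    _ < (t + Finsupp.single i 1).sum fun _ e => e := by
      rw [Finsupp.sum_add_index' (fun _ => rfl) (fun _ _ _ => rfl), Finsupp.sum_single_index rfl]
      omega
    _ ≤ f.totalDegree := le_totalDegree hshift

theorem one_mem_of_jackson_invariant {W : Submodule (RatFunc ℚ) (MvPolynomial (Fin n) (RatFunc ℚ))}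
    (hW : ∀ f ∈ W, ∀ i, jackson i f ∈ W) {f : MvPolynomial (Fin n) (RatFunc ℚ)} (hf : f ∈ W)
    (hf0 : f ≠ 0) : 1 ∈ W := by
  induction hd : f.totalDegree using Nat.strong_induction_on generalizing f with
  | _ d ih =>
    rcases eq_or_ne d 0 with rfl | hd0
    · obtain ⟨c, rfl⟩ : ∃ c, f = C c := ⟨_, totalDegree_eq_zero_iff_eq_C.1 hd⟩
      have hc : c ≠ 0 := by rintro rfl; exact hf0 (map_zero C)
      have h1 : (1 : MvPolynomial (Fin n) (RatFunc ℚ)) = c⁻¹ • C c := by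
        rw [smul_eq_C_mul, ← map_mul, inv_mul_cancel₀ hc, map_one]
      exact h1 ▸ W.smul_mem _ hf
    · obtain ⟨i, hi⟩ := exists_jackson_ne_zero (hd ▸ hd0)
      exact ih _ (hd ▸ totalDegree_jackson_lt hi) (hW f hf i) hi rfl

theorem eq_bot_or_eq_bot_of_jackson_invariant
    {V₁ V₂ : Submodule (RatFunc ℚ) (MvPolynomial (Fin n) (RatFunc ℚ))}
    (h₁ : ∀ f ∈ V₁, ∀ i, jackson i f ∈ V₁) (h₂ : ∀ f ∈ V₂, ∀ i, jackson i f ∈ V₂)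
    (hinf : V₁ ⊓ V₂ = ⊥) : V₁ = ⊥ ∨ V₂ = ⊥ := by
  by_contra! hne
  obtain ⟨f₁, hf₁, hf₁0⟩ := V₁.ne_bot_iff.1 hne.1
  obtain ⟨f₂, hf₂, hf₂0⟩ := V₂.ne_bot_iff.1 hne.2
  have h1 : (1 : MvPolynomial (Fin n) (RatFunc ℚ)) ∈ V₁ ⊓ V₂ :=
    ⟨one_mem_of_jackson_invariant h₁ hf₁ hf₁0, one_mem_of_jackson_invariant h₂ hf₂ hf₂0⟩
  rw [hinf, Submodule.mem_bot] at h1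
  exact one_ne_zero h1

end Jackson

section QMultinomial

variable {ι : Type*} [Fintype ι]

def qMultinomial (k : ι → ℤ) : RatFunc ℚ :=
  if ∀ i, 0 ≤ k i then qqPoch RatFunc.X (∑ i, k i).toNat / ∏ i, qqPoch RatFunc.X (k i).toNat else 0

theorem qMultinomial_add_single [DecidableEq ι] (k : ι → ℤ) {p : ι} (hp : 0 ≤ k p) :
    qMultinomial (k + Pi.single p 1) * (1 - RatFunc.X ^ ((k p).toNat + 1)) =
      (1 - RatFunc.X ^ (∑ i, k i + 1).toNat) * qMultinomial k := by
  by_cases hk : ∀ i, 0 ≤ k i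
  · have hk' : ∀ i, 0 ≤ (k + Pi.single p 1 : ι → ℤ) i := fun i =>
      add_nonneg (hk i) (by rw [Pi.single_apply]; split_ifs <;> norm_num)
    have hsum : ∑ i, (k + Pi.single p 1 : ι → ℤ) i = ∑ i, k i + 1 := by
      simp [Finset.sum_add_distrib]
    have hprod : ∏ i, qqPoch RatFunc.X ((k + Pi.single p 1 : ι → ℤ) i).toNat =
        (∏ i, qqPoch RatFunc.X (k i).toNat) * (1 - RatFunc.X ^ ((k p).toNat + 1)) := by
      rw [← Finset.mul_prod_erase _ _ (Finset.mem_univ p),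
        ← Finset.mul_prod_erase _ (fun i => qqPoch RatFunc.X (k i).toNat) (Finset.mem_univ p),
        Finset.prod_congr rfl fun i hi => by
          rw [Pi.add_apply, Pi.single_eq_of_ne (Finset.ne_of_mem_erase hi), add_zero]]
      rw [Pi.add_apply, Pi.single_eq_same, Int.toNat_add hp zero_le_one, Int.toNat_one,
        qqPoch_succ]
      ring
    have hsumNat : (∑ i, k i + 1).toNat = (∑ i, k i).toNat + 1 := by
      have hsum_nonneg := Finset.sum_nonneg fun i (_ : i ∈ Finset.univ) => hk i
      omega
    rw [qMultinomial, qMultinomial, if_pos hk, if_pos hk', hsum, hprod, hsumNat, qqPoch_succ]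
    have hP := qqPoch_ne_zero (∑ i, k i).toNat
    have hQ : ∏ i, qqPoch RatFunc.X (k i).toNat ≠ 0 :=
      Finset.prod_ne_zero_iff.2 fun i _ => qqPoch_ne_zero _
    have hX := RatFunc.one_sub_X_pow_ne_zero (K := ℚ) (k p).toNat.succ_ne_zero
    field_simp
  · obtain ⟨j, hj⟩ : ∃ j, k j < 0 := by simpa using hk
    have hk' : ¬ ∀ i, 0 ≤ (k + Pi.single p 1 : ι → ℤ) i := fun h => by
      have hjp : j ≠ p := by rintro rfl; omega
      have hj' := h j
      rw [Pi.add_apply, Pi.single_eq_of_ne hjp, add_zero] at hj'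
      omega
    rw [qMultinomial, qMultinomial, if_neg hk, if_neg hk', zero_mul, mul_zero]

end QMultinomial

section RogersSzego

variable {n r : ℕ} {v : Fin r → Fin n → ℤ}

def pairings (v : Fin r → Fin n → ℤ) (u : Fin n → ℕ) : Fin r → ℤ :=
  fun p => ∑ j, (u j : ℤ) * v p j

theorem sum_pairings (hsym : ∀ j, ∑ p, v p j = 0) (u : Fin n → ℕ) :
    ∑ p, pairings v u p = 0 := by
  simp only [pairings]
  rw [Finset.sum_comm]
  simp [← Finset.mul_sum, hsym]

theorem pairings_add_single (d : Fin n →₀ ℕ) (i : Fin n) :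
    pairings v (d + Finsupp.single i 1 : Fin n →₀ ℕ) = pairings v d + fun p => v p i := by
  ext p
  simp [pairings, Finsupp.single_apply, add_mul, Finset.sum_add_distrib]

theorem RSgen_eq_zero {a : Fin r → ℤ}
    (h : ¬ ∃ u : Fin n → ℕ, ∀ i, -(a i) ≤ ∑ j, (u j : ℤ) * v i j) : RSgen n r v a = 0 := by
  simp only [RSgen, if_neg (not_exists.1 h _), finsum_zero]

def jacksonShift (hnr : n ≤ r) (v : Fin r → Fin n → ℤ) (i : Fin n) (a : Fin r → ℤ) :
    Fin r → ℤ :=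
  a + (fun p => v p i) - Pi.single (Fin.castLE hnr i) 1

def rogersSzegoGenerators (n r : ℕ) (v : Fin r → Fin n → ℤ) :
    Set (MvPolynomial (Fin n) (RatFunc ℚ)) :=
  {f | ∃ a : Fin r → ℤ, (∀ i : Fin r, (i : ℕ) < n → a i = 0) ∧
    (∃ u : Fin n → ℕ, ∀ i, -(a i) ≤ ∑ j, (u j : ℤ) * v i j) ∧ f = RSgen n r v a}

variable (hnr : n ≤ r)
  (hv : ∀ i : Fin r, (i : ℕ) < n → ∀ j : Fin n, v i j = if (j : ℕ) = (i : ℕ) then 1 else 0)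

include hnr hv

theorem pairings_castLE (u : Fin n → ℕ) (i : Fin n) : pairings v u (Fin.castLE hnr i) = u i := by
  simp [pairings, hv (Fin.castLE hnr i) (by simp), Fin.val_inj]

theorem jacksonShift_eq_zero {a : Fin r → ℤ} (ha : ∀ i : Fin r, (i : ℕ) < n → a i = 0)
    (i : Fin n) : ∀ p : Fin r, (p : ℕ) < n → jacksonShift hnr v i a p = 0 := by
  intro p hp
  have hiff : (i : ℕ) = p ↔ p = Fin.castLE hnr i := by rw [Fin.ext_iff]; simp [eq_comm]
  simp [jacksonShift, ha p hp, hv p hp, Pi.single_apply, hiff]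

variable (hsym : ∀ j, ∑ p, v p j = 0)

include hsym

-- The lattice points of `P(a)` lie in the box `[0, |a|]ⁿ`, so the `∑ᶠ` defining `RS_a` is finite.
theorem le_toNat_sum_of_nonneg {a : Fin r → ℤ} (ha : ∀ i : Fin r, (i : ℕ) < n → a i = 0)
    {u : Fin n → ℕ} (hu : ∀ p, 0 ≤ (pairings v u + a) p) (j : Fin n) :
    u j ≤ (∑ p, a p).toNat := by
  have hle := Finset.single_le_sum (fun p _ => hu p) (Finset.mem_univ (Fin.castLE hnr j))
  simp only [Pi.add_apply] at hle
  rw [Finset.sum_add_distrib, sum_pairings hsym, zero_add,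
    pairings_castLE hnr hv, ha _ (by simp)] at hle
  omega

theorem coeff_RSgen {a : Fin r → ℤ} (ha : ∀ i : Fin r, (i : ℕ) < n → a i = 0)
    (d : Fin n →₀ ℕ) : (RSgen n r v a).coeff d = qMultinomial (pairings v d + a) := by
  have hcond : ∀ u : Fin n → ℕ,
      (∀ i, -(a i) ≤ ∑ j, (u j : ℤ) * v i j) ↔ ∀ i, 0 ≤ (pairings v u + a) i := fun u =>
    forall_congr' fun i => by simp [pairings]; omega
  rw [RSgen, ← coeffAddMonoidHom_apply, AddMonoidHom.map_finsum, finsum_eq_single _ ⇑d]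
  · have hsum : ∑ p, (pairings v d + a) p = ∑ p, a p := by
      simp [Finset.sum_add_distrib, sum_pairings hsym]
    rw [coeffAddMonoidHom_apply, Finsupp.equivFunOnFinite_symm_coe, qMultinomial, hsum]
    by_cases h : ∀ i, -(a i) ≤ ∑ j, (d j : ℤ) * v i j
    · rw [if_pos h, if_pos ((hcond d).1 h), coeff_monomial, if_pos rfl]
      rfl
    · rw [if_neg h, if_neg (mt (hcond d).2 h), coeff_zero]
  · intro u hu
    simp only [coeffAddMonoidHom_apply]
    split_ifs
    · rw [coeff_monomial, if_neg fun h => hu ((Equiv.symm_apply_eq _).1 h)]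
    · exact coeff_zero _
  · refine (Set.finite_Icc 0 fun _ => (∑ p, a p).toNat).subset fun u hu => ?_
    have hu' := (hcond u).1 (by by_contra h; exact hu (if_neg h))
    exact ⟨fun _ => Nat.zero_le _, le_toNat_sum_of_nonneg hnr hv hsym ha hu'⟩

theorem jackson_RSgen {a : Fin r → ℤ} (ha : ∀ i : Fin r, (i : ℕ) < n → a i = 0) (i : Fin n) :
    jackson i (RSgen n r v a) =
      ((1 - RatFunc.X ^ (∑ p, a p).toNat) / (1 - RatFunc.X) : RatFunc ℚ) •
        RSgen n r v (jacksonShift hnr v i a) := by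
  ext d
  set k := pairings v d + jacksonShift hnr v i a
  have hshift : pairings v (d + Finsupp.single i 1 : Fin n →₀ ℕ) + a =
      k + Pi.single (Fin.castLE hnr i) 1 := by
    rw [pairings_add_single]; ext p; simp [k, jacksonShift]; ring
  have hk_castLE : k (Fin.castLE hnr i) = d i := by
    have hvi := hv (Fin.castLE hnr i) (by simp) i
    simp [k, jacksonShift, pairings_castLE hnr hv,
      ha _ (by simp : ((Fin.castLE hnr i : Fin r) : ℕ) < n), hvi]
  have hk_sum : ∑ p, k p + 1 = ∑ p, a p := by
    simp [k, jacksonShift, Finset.sum_add_distrib, sum_pairings hsym, hsym]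
  have hrec := qMultinomial_add_single k (p := Fin.castLE hnr i) (by simp [hk_castLE])
  rw [hk_castLE, Int.toNat_natCast, hk_sum] at hrec
  rw [coeff_jackson, coeff_smul, coeff_RSgen hnr hv hsym ha,
    coeff_RSgen hnr hv hsym (jacksonShift_eq_zero hnr hv ha i), hshift, smul_eq_mul]
  linear_combination (1 - RatFunc.X)⁻¹ * hrec

theorem jackson_mem_span_rogersSzegoGenerators {f : MvPolynomial (Fin n) (RatFunc ℚ)}
    (hf : f ∈ Submodule.span (RatFunc ℚ) (rogersSzegoGenerators n r v)) (i : Fin n) :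
    jackson i f ∈ Submodule.span (RatFunc ℚ) (rogersSzegoGenerators n r v) := by
  set W := Submodule.span (RatFunc ℚ) (rogersSzegoGenerators n r v)
  have hgen : rogersSzegoGenerators n r v ⊆ W.comap (jacksonLinear i) := by
    rintro _ ⟨a, ha, -, rfl⟩
    rw [SetLike.mem_coe, Submodule.mem_comap, jacksonLinear_apply, jackson_RSgen hnr hv hsym ha]
    refine W.smul_mem _ ?_
    by_cases hne : ∃ u : Fin n → ℕ, ∀ p, -(jacksonShift hnr v i a p) ≤ ∑ j, (u j : ℤ) * v p j
    · exact Submodule.subset_span ⟨_, jacksonShift_eq_zero hnr hv ha i, hne, rfl⟩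
    · rw [RSgen_eq_zero hne]
      exact W.zero_mem
  exact Submodule.span_le.2 hgen hf

end RogersSzego

end

theorem stmt6_general (n r : ℕ) (hnr : n < r) (v : Fin r → Fin n → ℤ)
    (hv : ∀ i : Fin r, (i : ℕ) < n → ∀ j : Fin n, v i j = if (j : ℕ) = (i : ℕ) then 1 else 0)
    (hsym : ∀ j, ∑ i, v i j = 0)
    (V : Submodule (RatFunc ℚ) (MvPolynomial (Fin n) (RatFunc ℚ)))
    (hV : V = Submodule.span (RatFunc ℚ)
      {f | ∃ a : Fin r → ℤ, (∀ i : Fin r, (i : ℕ) < n → a i = 0) ∧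
        (∃ u : Fin n → ℕ, ∀ i, -(a i) ≤ ∑ j, (u j : ℤ) * v i j) ∧ f = RSgen n r v a}) :
    (∀ f ∈ V, ∀ i : Fin n, jackson i f ∈ V) ∧
      ∀ V₁ V₂ : Submodule (RatFunc ℚ) (MvPolynomial (Fin n) (RatFunc ℚ)),
        V₁ ≤ V → V₂ ≤ V →
        (∀ f ∈ V₁, ∀ i : Fin n, jackson i f ∈ V₁) →
        (∀ f ∈ V₂, ∀ i : Fin n, jackson i f ∈ V₂) →
        V₁ ⊓ V₂ = ⊥ → V₁ ⊔ V₂ = V → V₁ = ⊥ ∨ V₂ = ⊥ := by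
  subst hV
  exact ⟨fun f hf i => jackson_mem_span_rogersSzegoGenerators hnr.le hv hsym hf i,
    fun V₁ V₂ _ _ h₁ h₂ hinf _ => eq_bot_or_eq_bot_of_jackson_invariant h₁ h₂ hinf⟩

/-- The `ℚ(q)`-linear span `V` of the generalized Rogers–Szegő polynomials
`RS_a(x;q)`, over all first-orthant tuples `a` with `P(a)∩ℤⁿ ≠ ∅`, is invariant under the
Jackson derivatives `(d/dx₁)_q,…,(d/dxₙ)_q`, and is indecomposable under them: if
`V = V₁ ⊕ V₂` with `V₁, V₂` invariant subspaces, then `V₁ = 0` or `V₂ = 0`. -/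
theorem stmt6 (n r : ℕ) (hn : 0 < n) (hnr : n < r) (v : Fin r → Fin n → ℤ)
    (hv : ∀ i : Fin r, (i : ℕ) < n → ∀ j : Fin n, v i j = if (j : ℕ) = (i : ℕ) then 1 else 0)
    (hsym : ∀ j, ∑ i, v i j = 0)
    (V : Submodule (RatFunc ℚ) (MvPolynomial (Fin n) (RatFunc ℚ)))
    (hV : V = Submodule.span (RatFunc ℚ)
      {f | ∃ a : Fin r → ℤ, (∀ i : Fin r, (i : ℕ) < n → a i = 0) ∧
        (∃ u : Fin n → ℕ, ∀ i, -(a i) ≤ ∑ j, (u j : ℤ) * v i j) ∧ f = RSgen n r v a}) :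
    (∀ f ∈ V, ∀ i : Fin n, jackson i f ∈ V) ∧
      ∀ V₁ V₂ : Submodule (RatFunc ℚ) (MvPolynomial (Fin n) (RatFunc ℚ)),
        V₁ ≤ V → V₂ ≤ V →
        (∀ f ∈ V₁, ∀ i : Fin n, jackson i f ∈ V₁) →
        (∀ f ∈ V₂, ∀ i : Fin n, jackson i f ∈ V₂) →
        V₁ ⊓ V₂ = ⊥ → V₁ ⊔ V₂ = V → V₁ = ⊥ ∨ V₂ = ⊥ :=
  stmt6_general n r hnr v hv hsym V hV
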